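/- For every integer n ≥ 1, the feedback vertex numbers of the Sierpiński triangle graphs satisfy the recurrence τ(Ŝ_3^n) = 3·τ(Ŝ_3^{n−1}) − 1. -/

import Mathlib

open SimpleGraph

/-- The Sierpinski graph `S_p^n` on vertex set `P^n`: two distinct vertices are adjacent
iff they can be written as `s i j^(d-1)` and `s j i^(d-1)`. -/
def sierpinski (p n : Nat) : SimpleGraph (Fin n → Fin p) :=
  SimpleGraph.fromRel (fun u v =>
    ∃ t : Fin n, ∃ i j : Fin p, i ≠ j ∧
      (∀ k, k < t → u k = v k) ∧ u t = i ∧ v t = j ∧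
      (∀ k, t < k → u k = j ∧ v k = i))

/-- `X` is a feedback vertex set of `G` if deleting it leaves an acyclic graph. -/
def IsFeedbackVertexSet {V : Type*} (G : SimpleGraph V) (X : Set V) : Prop :=
  (G.induce Xᶜ).IsAcyclic

/-- The feedback vertex number: the minimum cardinality of a feedback vertex set. -/
noncomputable def feedbackNumber {V : Type*} (G : SimpleGraph V) : Nat :=
  sInf {k | ∃ X : Finset V, X.card = k ∧ IsFeedbackVertexSet G ↑X}

/-- The maximum number of vertices of an induced forest of `G`. -/
noncomputable def maxInducedForest {V : Type*} (G : SimpleGraph V) : Nat :=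
  sSup {k | ∃ Y : Finset V, Y.card = k ∧ (G.induce (↑Y : Set V)).IsAcyclic}

/-- The non-clique edges of `S_p^(n+1)`: edges `{s i j^l, s j i^l}` with `l ≥ 1`,
i.e. adjacency witnessed at a position `t` with `t < n`. -/
def nonCliqueRel (p n : Nat) (u v : Fin (n+1) → Fin p) : Prop :=
  ∃ t : Fin (n+1), (t : Nat) < n ∧ ∃ i j : Fin p, i ≠ j ∧
    (∀ k, k < t → u k = v k) ∧ u t = i ∧ v t = j ∧
    (∀ k, t < k → u k = j ∧ v k = i)

/-- The setoid identifying the two endpoints of every non-clique edge of `S_p^(n+1)`. -/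
def triSetoid (p n : Nat) : Setoid (Fin (n+1) → Fin p) :=
  Relation.EqvGen.setoid (nonCliqueRel p n)

/-- The generalized Sierpinski triangle graph: the contraction of all
non-clique edges of `S_p^(n+1)`. -/
def sierpinskiTriangle (p n : Nat) : SimpleGraph (Quotient (triSetoid p n)) where
  Adj x y := x ≠ y ∧ ∃ u v : Fin (n+1) → Fin p,
    Quotient.mk (triSetoid p n) u = x ∧ Quotient.mk (triSetoid p n) v = y ∧
    (sierpinski p (n+1)).Adj u v
  symm := by
    refine ⟨?_⟩
    rintro x y ⟨hxy, u, v, hu, hv, h⟩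
    exact ⟨hxy.symm, v, u, hv, hu, h.symm⟩
  loopless := by
    refine ⟨?_⟩
    rintro x ⟨hxx, -⟩
    exact hxx rfl


/-!
Each of the `3 ^ n` elementary triangles `{s0, s1, s2}` of `Ŝ_3^n` must meet a feedback vertex
set, and a vertex lies in at most two of them, so `τ(Ŝ_3^n) ≥ (3 ^ n + 1) / 2`.

Conversely, `Ŝ_3^(n+1)` consists of three copies of `Ŝ_3^n`, copies `i` and `j` sharing the single
vertex `i j^n = j i^n`. Acyclicity of `G - X` is certified by a rank function under which every
surviving vertex has at most one surviving neighbour of no larger rank. By induction, for any two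
corners `a ≠ b` there is a feedback vertex set of size `(3 ^ n + 1) / 2` containing the corner `a`
and no other corner, with a certifying rank in which `b` lies below all its neighbours. Three such
sets, placed so that two copies delete their common vertex and each remaining shared vertex is the
root of one of its copies, glue to one of size `3 (3 ^ n + 1) / 2 - 1 = (3 ^ (n + 1) + 1) / 2`.
-/

namespace SimpleGraph

variable {V : Type*} {G : SimpleGraph V}

theorem isAcyclic_of_rank (ρ : V → ℕ)
    (h : ∀ ⦃x y z⦄, G.Adj x y → G.Adj x z → ρ y ≤ ρ x → ρ z ≤ ρ x → y = z) :
    G.IsAcyclic := by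
  classical
  intro v c hc
  obtain ⟨u, hu, hmax⟩ := c.support.toFinset.exists_max_image ρ ⟨v, by simp⟩
  rw [List.mem_toFinset] at hu
  -- rotated to start at a vertex of maximal rank, the cycle gives that vertex two distinct
  -- neighbours of no larger rank
  have hc' := hc.rotate hu
  have hle : ∀ w ∈ (c.rotate u hu).support, ρ w ≤ ρ u := fun w hw =>
    hmax w (List.mem_toFinset.2 ((c.mem_support_rotate_iff u hu).1 hw))
  exact hc'.snd_ne_penultimate (h (Walk.adj_snd hc'.not_nil)
    (Walk.adj_penultimate hc'.not_nil).symm (hle _ (Walk.getVert_mem_support _ _))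
    (hle _ (Walk.getVert_mem_support _ _)))

variable (G) in
def IsForestRank (X : Set V) (ρ : V → ℕ) : Prop :=
  ∀ ⦃x y z⦄, x ∉ X → y ∉ X → z ∉ X → G.Adj x y → G.Adj x z → ρ y ≤ ρ x → ρ z ≤ ρ x → y = z

variable (G) in
def IsRankRoot (X : Set V) (ρ : V → ℕ) (r : V) : Prop :=
  ∀ ⦃y⦄, y ∉ X → G.Adj r y → ρ r < ρ y

variable {X Y : Set V} {ρ ρ' : V → ℕ} {r : V}

theorem IsForestRank.isFeedbackVertexSet (h : G.IsForestRank X ρ) : IsFeedbackVertexSet G X :=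
  isAcyclic_of_rank (fun x => ρ x) fun x y z hxy hxz hyx hzx =>
    Subtype.ext (h x.2 y.2 z.2 hxy hxz hyx hzx)

theorem IsForestRank.mono (h : G.IsForestRank X ρ) (hXY : X ⊆ Y) : G.IsForestRank Y ρ :=
  fun _ _ _ hx hy hz => h (mt (@hXY _) hx) (mt (@hXY _) hy) (mt (@hXY _) hz)

theorem IsRankRoot.mono (h : G.IsRankRoot X ρ r) (hXY : X ⊆ Y) : G.IsRankRoot Y ρ r :=
  fun _ hy => h (mt (@hXY _) hy)

theorem IsForestRank.congr (h : G.IsForestRank X ρ)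
    (h' : ∀ ⦃x y⦄, x ∉ X → y ∉ X → G.Adj x y → (ρ' y ≤ ρ' x ↔ ρ y ≤ ρ x)) :
    G.IsForestRank X ρ' := fun _ _ _ hx hy hz hxy hxz hyx hzx =>
  h hx hy hz hxy hxz ((h' hx hy hxy).1 hyx) ((h' hx hz hxz).1 hzx)

theorem IsForestRank.shift_of_isRankRoot (h : G.IsForestRank X ρ) (hr : G.IsRankRoot X ρ r)
    {M : ℕ} (hr' : ρ' r < M) (hshift : ∀ ⦃y⦄, y ∉ X → y ≠ r → ρ' y = ρ y + M) :
    G.IsForestRank X ρ' ∧ G.IsRankRoot X ρ' r := by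
  have hroot : G.IsRankRoot X ρ' r := fun y hy hry => by
    rw [hshift hy hry.ne.symm]
    omega
  refine ⟨h.congr fun x y hx hy hxy => ?_, hroot⟩
  rcases eq_or_ne x r with rfl | hxr
  · simp only [(hroot hy hxy).not_ge, (hr hy hxy).not_ge]
  rcases eq_or_ne y r with rfl | hyr
  · simp only [(hroot hx hxy.symm).le, (hr hx hxy.symm).le]
  rw [hshift hx hxr, hshift hy hyr]
  omega

end SimpleGraph

theorem feedbackNumber_eq {V : Type*} {G : SimpleGraph V} {k : ℕ} {X : Finset V}
    (hX : IsFeedbackVertexSet G X) (hXk : X.card ≤ k)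
    (hk : ∀ Y : Finset V, IsFeedbackVertexSet G Y → k ≤ Y.card) : feedbackNumber G = k := by
  have hmem : X.card ∈ {k | ∃ X : Finset V, X.card = k ∧ IsFeedbackVertexSet G ↑X} :=
    ⟨X, rfl, hX⟩
  refine le_antisymm ((Nat.sInf_le hmem).trans hXk) ?_
  obtain ⟨Y, hY, hYX⟩ := Nat.sInf_mem ⟨_, hmem⟩
  exact (hk Y hYX).trans_eq hY

namespace SierpinskiTriangle

variable {p n : ℕ}

abbrev Vertex (p n : ℕ) := Quotient (triSetoid p n)

abbrev mk (u : Fin (n + 1) → Fin p) : Vertex p n := Quotient.mk _ u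

def corner (n : ℕ) (c : Fin p) : Vertex p n := mk fun _ => c

theorem nonCliqueRel_symm {u v : Fin (n + 1) → Fin p} (h : nonCliqueRel p n u v) :
    nonCliqueRel p n v u := by
  obtain ⟨t, ht, i, j, hij, hlt, hut, hvt, hgt⟩ := h
  exact ⟨t, ht, j, i, hij.symm, fun k hk => (hlt k hk).symm, hvt, hut,
    fun k hk => (hgt k hk).symm⟩

theorem nonCliqueRel_unique {u v w : Fin (n + 1) → Fin p} (hv : nonCliqueRel p n u v)
    (hw : nonCliqueRel p n u w) : v = w := by
  obtain ⟨t, ht, i, j, hij, hlt, hut, hvt, hgt⟩ := hv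
  obtain ⟨t', ht', i', j', hij', hlt', hut', hvt', hgt'⟩ := hw
  -- `t` is the last position at which `u` differs from `u (last n) = j`
  have hjj : j = j' := (hgt (Fin.last n) ht).1.symm.trans (hgt' (Fin.last n) ht').1
  have htt : t = t' := by
    by_contra hne
    rcases lt_or_gt_of_ne hne with h | h
    · exact hij' (hut'.symm.trans ((hgt t' h).1.trans hjj))
    · exact hij (hut.symm.trans ((hgt' t h).1.trans hjj.symm))
  subst htt
  have hii : i = i' := hut.symm.trans hut'
  funext k
  rcases lt_trichotomy k t with hk | rfl | hk
  · exact (hlt k hk).symm.trans (hlt' k hk)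
  · rw [hvt, hvt', hjj]
  · rw [(hgt k hk).2, (hgt' k hk).2, hii]

theorem equivalence_eq_or_nonCliqueRel :
    Equivalence fun u v : Fin (n + 1) → Fin p => u = v ∨ nonCliqueRel p n u v where
  refl _ := Or.inl rfl
  symm := by
    rintro u v (rfl | h)
    exacts [Or.inl rfl, Or.inr (nonCliqueRel_symm h)]
  trans := by
    rintro u v w (rfl | huv) (rfl | hvw)
    exacts [Or.inl rfl, Or.inr hvw, Or.inr huv,
      Or.inl (nonCliqueRel_unique (nonCliqueRel_symm huv) hvw)]

theorem mk_eq_mk_iff {u v : Fin (n + 1) → Fin p} :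
    mk u = mk v ↔ u = v ∨ nonCliqueRel p n u v := by
  refine ⟨fun h => ?_, ?_⟩
  · rw [← equivalence_eq_or_nonCliqueRel.eqvGen_iff]
    exact Relation.EqvGen.mono (fun _ _ => Or.inr) _ _ (Quotient.exact h)
  · rintro (rfl | h)
    exacts [rfl, Quotient.sound (Relation.EqvGen.rel _ _ h)]

theorem not_nonCliqueRel_const {u : Fin (n + 1) → Fin p} {c : Fin p} :
    ¬nonCliqueRel p n u fun _ => c := by
  rintro ⟨t, ht, i, j, hij, -, -, hvt, hgt⟩
  exact hij ((hgt (Fin.last n) ht).2.symm.trans hvt)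

theorem mk_eq_corner_iff {u : Fin (n + 1) → Fin p} {c : Fin p} :
    mk u = corner n c ↔ u = fun _ => c := by
  rw [corner, mk_eq_mk_iff, or_iff_left not_nonCliqueRel_const]

theorem corner_injective : Function.Injective (corner (p := p) n) := fun _ _ h =>
  congrFun (mk_eq_corner_iff.1 h) 0

theorem mk_snoc_ne_mk_snoc (s : Fin n → Fin p) {i j : Fin p} (hij : i ≠ j) :
    mk (Fin.snoc s i) ≠ mk (Fin.snoc s j) := by
  rw [Ne, mk_eq_mk_iff, not_or]
  refine ⟨fun h => hij (Fin.snoc_inj.1 h).2, ?_⟩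
  rintro ⟨t, ht, a, b, hab, -, hut, hvt, -⟩
  rw [show t = Fin.castSucc ⟨t, ht⟩ from rfl, Fin.snoc_castSucc] at hut hvt
  exact hab (hut.symm.trans hvt)

theorem nonCliqueRel_or_exists_snoc {u v : Fin (n + 1) → Fin p}
    (h : ∃ t : Fin (n + 1), ∃ i j : Fin p, i ≠ j ∧ (∀ k, k < t → u k = v k) ∧ u t = i ∧
      v t = j ∧ ∀ k, t < k → u k = j ∧ v k = i) :
    nonCliqueRel p n u v ∨ ∃ s i j, i ≠ j ∧ u = Fin.snoc s i ∧ v = Fin.snoc s j := by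
  obtain ⟨t, i, j, hij, hlt, hut, hvt, hgt⟩ := h
  by_cases ht : (t : ℕ) < n
  · exact Or.inl ⟨t, ht, i, j, hij, hlt, hut, hvt, hgt⟩
  obtain rfl : t = Fin.last n :=
    Fin.ext (by have := t.isLt; simp only [Fin.val_last]; omega)
  have hinit : Fin.init v = Fin.init u :=
    funext fun k => (hlt _ (Fin.castSucc_lt_last k)).symm
  refine Or.inr ⟨Fin.init u, i, j, hij, ?_, ?_⟩
  · rw [← hut, Fin.snoc_init_self]
  · rw [← hvt, ← hinit, Fin.snoc_init_self]

theorem adj_iff {x y : Vertex p n} :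
    (sierpinskiTriangle p n).Adj x y ↔
      ∃ s i j, i ≠ j ∧ x = mk (Fin.snoc s i) ∧ y = mk (Fin.snoc s j) := by
  constructor
  · rintro ⟨hne, u, v, rfl, rfl, hadj⟩
    rw [sierpinski, fromRel_adj] at hadj
    rcases hadj.2 with h | h
    · rcases nonCliqueRel_or_exists_snoc h with h | ⟨s, i, j, hij, rfl, rfl⟩
      exacts [absurd (mk_eq_mk_iff.2 (Or.inr h)) hne, ⟨s, i, j, hij, rfl, rfl⟩]
    · rcases nonCliqueRel_or_exists_snoc h with h | ⟨s, i, j, hij, rfl, rfl⟩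
      exacts [absurd (mk_eq_mk_iff.2 (Or.inr h)) hne.symm, ⟨s, j, i, hij.symm, rfl, rfl⟩]
  · rintro ⟨s, i, j, hij, rfl, rfl⟩
    have hne := mk_snoc_ne_mk_snoc s hij
    refine ⟨hne, _, _, rfl, rfl, ?_⟩
    rw [sierpinski, fromRel_adj]
    refine ⟨fun h => hne (congrArg mk h), Or.inl ⟨Fin.last n, i, j, hij, fun k hk => ?_,
      Fin.snoc_last _ _, Fin.snoc_last _ _, fun k hk => absurd (Fin.le_last k) hk.not_ge⟩⟩
    rw [← Fin.castSucc_castPred k hk.ne, Fin.snoc_castSucc, Fin.snoc_castSucc]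

theorem nonCliqueRel_cons_cons {i j : Fin p} {u v : Fin (n + 1) → Fin p} :
    nonCliqueRel p (n + 1) (Fin.cons i u) (Fin.cons j v) ↔
      i = j ∧ nonCliqueRel p n u v ∨ i ≠ j ∧ (u = fun _ => j) ∧ v = fun _ => i := by
  constructor
  · rintro ⟨t, ht, a, b, hab, hlt, hut, hvt, hgt⟩
    cases t using Fin.cases with
    | zero =>
      simp only [Fin.cons_zero] at hut hvt
      subst hut hvt
      refine Or.inr ⟨hab, funext fun k => ?_, funext fun k => ?_⟩
      · simpa using (hgt k.succ k.succ_pos).1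
      · simpa using (hgt k.succ k.succ_pos).2
    | succ t =>
      refine Or.inl ⟨by simpa using hlt 0 t.succ_pos, t, by simpa using ht, a, b, hab,
        fun k hk => ?_, by simpa using hut, by simpa using hvt, fun k hk => ?_⟩
      · simpa using hlt k.succ (Fin.succ_lt_succ_iff.2 hk)
      · simpa using hgt k.succ (Fin.succ_lt_succ_iff.2 hk)
  · rintro (⟨rfl, t, ht, a, b, hab, hlt, hut, hvt, hgt⟩ | ⟨hij, rfl, rfl⟩)
    · refine ⟨t.succ, by simpa using ht, a, b, hab, fun k hk => ?_, by simpa using hut,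
        by simpa using hvt, fun k hk => ?_⟩
      · cases k using Fin.cases with
        | zero => rfl
        | succ k => simpa using hlt k (Fin.succ_lt_succ_iff.1 hk)
      · cases k using Fin.cases with
        | zero => exact absurd hk (Fin.not_lt_zero _)
        | succ k => simpa using hgt k (Fin.succ_lt_succ_iff.1 hk)
    · refine ⟨0, n.succ_pos, i, j, hij, fun k hk => absurd hk (Fin.not_lt_zero _), rfl, rfl,
        fun k hk => ?_⟩
      cases k using Fin.cases with
      | zero => exact absurd hk (lt_irrefl 0)
      | succ k => exact ⟨rfl, rfl⟩

theorem mk_cons_eq_mk_cons_iff {i j : Fin p} {u v : Fin (n + 1) → Fin p} :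
    mk (Fin.cons i u : Fin (n + 2) → Fin p) = mk (Fin.cons j v) ↔
      i = j ∧ mk u = mk v ∨ i ≠ j ∧ mk u = corner n j ∧ mk v = corner n i := by
  rw [mk_eq_mk_iff, mk_eq_mk_iff, Fin.cons_inj, nonCliqueRel_cons_cons, mk_eq_corner_iff,
    mk_eq_corner_iff, and_or_left, or_assoc]

def copy (i : Fin p) : Vertex p n → Vertex p (n + 1) :=
  Quotient.lift (fun u => mk (Fin.cons i u)) fun _ _ h =>
    mk_cons_eq_mk_cons_iff.2 (Or.inl ⟨rfl, Quotient.sound h⟩)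

theorem copy_mk (i : Fin p) (u : Fin (n + 1) → Fin p) : copy i (mk u) = mk (Fin.cons i u) :=
  rfl

theorem copy_eq_copy_iff {i j : Fin p} {x y : Vertex p n} :
    copy i x = copy j y ↔ i = j ∧ x = y ∨ i ≠ j ∧ x = corner n j ∧ y = corner n i := by
  induction x using Quotient.inductionOn
  induction y using Quotient.inductionOn
  exact mk_cons_eq_mk_cons_iff

theorem copy_injective (i : Fin p) : Function.Injective (copy (n := n) i) := fun _ _ h =>
  (copy_eq_copy_iff.1 h).elim And.right fun h' => absurd rfl h'.1

theorem copy_corner_comm (i j : Fin p) : copy i (corner n j) = copy j (corner n i) := by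
  rcases eq_or_ne i j with rfl | hij
  · rfl
  · exact copy_eq_copy_iff.2 (Or.inr ⟨hij, rfl, rfl⟩)

theorem copy_corner_self (i : Fin p) : copy i (corner n i) = corner (n + 1) i := by
  rw [corner, copy_mk, corner]
  congr 1
  funext k
  cases k using Fin.cases <;> rfl

theorem copy_eq_corner_iff {i d : Fin p} {x : Vertex p n} :
    copy i x = corner (n + 1) d ↔ i = d ∧ x = corner n d := by
  rw [← copy_corner_self, copy_eq_copy_iff]
  refine ⟨?_, Or.inl⟩
  rintro (h | ⟨hid, -, h⟩)
  exacts [h, absurd (corner_injective h).symm hid]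

theorem exists_copy_of_adj {x' y' : Vertex p (n + 1)}
    (h : (sierpinskiTriangle p (n + 1)).Adj x' y') :
    ∃ i x y, copy i x = x' ∧ copy i y = y' ∧ (sierpinskiTriangle p n).Adj x y := by
  obtain ⟨s, a, b, hab, rfl, rfl⟩ := adj_iff.1 h
  refine ⟨s 0, mk (Fin.snoc (Fin.tail s) a), mk (Fin.snoc (Fin.tail s) b), ?_, ?_,
    adj_iff.2 ⟨Fin.tail s, a, b, hab, rfl, rfl⟩⟩ <;>
    rw [copy_mk, Fin.cons_snoc_eq_snoc_cons, Fin.cons_self_tail]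

theorem corner_mem_image_copy_iff [DecidableEq (Vertex p (n + 1))] {Y : Finset (Vertex p n)}
    {i d : Fin p} : corner (n + 1) d ∈ Y.image (copy i) ↔ i = d ∧ corner n d ∈ Y := by
  simp only [Finset.mem_image, copy_eq_corner_iff]
  constructor
  · rintro ⟨y, hy, rfl, rfl⟩
    exact ⟨rfl, hy⟩
  · rintro ⟨rfl, hy⟩
    exact ⟨_, hy, rfl, rfl⟩

theorem extend_copy_apply_of_ne {α : Sort*} {i j : Fin p} {y : Vertex p n} (hij : i ≠ j)
    (hy : y ≠ corner n i) (f : Vertex p n → α) (g : Vertex p (n + 1) → α) :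
    Function.extend (copy i) f g (copy j y) = g (copy j y) :=
  Function.extend_apply' _ _ _ fun ⟨_, h⟩ =>
    hy ((copy_eq_copy_iff.1 h).resolve_left fun h' => hij h'.1).2.2

theorem card_image_copy_union_le [DecidableEq (Vertex p (n + 1))]
    {XA XB XC : Finset (Vertex p n)} {a b c : Fin p} {k : ℕ} (hA : XA.card ≤ k)
    (hB : XB.card ≤ k) (hC : XC.card ≤ k) (hcXB : corner n c ∈ XB) (hbXC : corner n b ∈ XC) :
    (XA.image (copy a) ∪ XB.image (copy b) ∪ XC.image (copy c)).card ≤ 3 * k - 1 := by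
  have hBC : 1 ≤ (XB.image (copy b) ∩ XC.image (copy c)).card :=
    Finset.card_pos.2 ⟨copy b (corner n c), Finset.mem_inter.2 ⟨Finset.mem_image_of_mem _ hcXB,
      copy_corner_comm c b ▸ Finset.mem_image_of_mem _ hbXC⟩⟩
  have := Finset.card_union_add_card_inter (XB.image (copy b)) (XC.image (copy c))
  have := Finset.card_union_le (XA.image (copy a)) (XB.image (copy b) ∪ XC.image (copy c))
  have := XA.card_image_le (f := copy a)
  have := XB.card_image_le (f := copy b)
  have := XC.card_image_le (f := copy c)
  rw [Finset.union_assoc]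
  omega

theorem exists_eq_corner_zero (x : Vertex p 0) : ∃ c, x = corner 0 c := by
  induction x using Quotient.inductionOn with
  | h u => exact ⟨u 0, congrArg mk (funext fun k => by rw [Fin.fin_one_eq_zero k])⟩

theorem card_le_two_of_forall_mk_eq {x : Vertex p n} {U : Finset (Fin (n + 1) → Fin p)}
    (hU : ∀ u ∈ U, mk u = x) : U.card ≤ 2 := by
  by_contra! h
  obtain ⟨u, hu, v, hv, w, hw, huv, huw, hvw⟩ := Finset.two_lt_card.1 h
  have hv' := (mk_eq_mk_iff.1 ((hU u hu).trans (hU v hv).symm)).resolve_left huv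
  have hw' := (mk_eq_mk_iff.1 ((hU u hu).trans (hU w hw).symm)).resolve_left huw
  exact hvw (nonCliqueRel_unique hv' hw')

theorem exists_mk_snoc_mem {X : Finset (Vertex 3 n)}
    (hX : IsFeedbackVertexSet (sierpinskiTriangle 3 n) X) (s : Fin n → Fin 3) :
    ∃ i, mk (Fin.snoc s i) ∈ X := by
  classical
  by_contra! hs
  refine IsAcyclic.cliqueFree hX le_rfl
    {(⟨_, hs 0⟩ : ↥(X : Set (Vertex 3 n))ᶜ), ⟨_, hs 1⟩, ⟨_, hs 2⟩} ?_
  simp only [is3Clique_triple_iff, comap_adj, Function.Embedding.subtype_apply]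
  exact ⟨adj_iff.2 ⟨s, 0, 1, by decide, rfl, rfl⟩, adj_iff.2 ⟨s, 0, 2, by decide, rfl, rfl⟩,
    adj_iff.2 ⟨s, 1, 2, by decide, rfl, rfl⟩⟩

theorem three_pow_le_two_mul_card {X : Finset (Vertex 3 n)}
    (hX : IsFeedbackVertexSet (sierpinskiTriangle 3 n) X) : 3 ^ n ≤ 2 * X.card := by
  classical
  choose pick hpick using exists_mk_snoc_mem hX
  set U := Finset.univ.image fun s => (Fin.snoc s (pick s) : Fin (n + 1) → Fin 3)
  have hU : U.card = 3 ^ n := by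
    rw [Finset.card_image_of_injective _ fun s t h => by simpa using congrArg Fin.init h,
      Finset.card_univ, Fintype.card_fun, Fintype.card_fin, Fintype.card_fin]
  have hUX : U.image mk ⊆ X := by
    simp only [U, Finset.image_image, Finset.image_subset_iff]
    exact fun s _ => hpick s
  calc 3 ^ n = U.card := hU.symm
    _ ≤ 2 * (U.image mk).card := Finset.card_le_mul_card_image U 2 fun x _ =>
      card_le_two_of_forall_mk_eq fun u hu => (Finset.mem_filter.1 hu).2
    _ ≤ 2 * X.card := Nat.mul_le_mul_left 2 (Finset.card_le_card hUX)

theorem isForestRank_succ {X : Set (Vertex p (n + 1))} {ρ : Vertex p (n + 1) → ℕ}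
    (hcopy : ∀ i, (sierpinskiTriangle p n).IsForestRank (copy i ⁻¹' X) (ρ ∘ copy i))
    (hglue : ∀ i j, i ≠ j → copy i (corner n j) ∉ X →
      (sierpinskiTriangle p n).IsRankRoot (copy i ⁻¹' X) (ρ ∘ copy i) (corner n j) ∨
      (sierpinskiTriangle p n).IsRankRoot (copy j ⁻¹' X) (ρ ∘ copy j) (corner n i)) :
    (sierpinskiTriangle p (n + 1)).IsForestRank X ρ := by
  intro x' y' z' hx hy hz hx'y' hx'z' hyx hzx
  obtain ⟨i, x, y, rfl, rfl, hxy⟩ := exists_copy_of_adj hx'y'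
  obtain ⟨j, x₂, z, hx₂, rfl, hxz⟩ := exists_copy_of_adj hx'z'
  rcases copy_eq_copy_iff.1 hx₂ with ⟨rfl, rfl⟩ | ⟨hji, rfl, rfl⟩
  · exact congrArg (copy j) (hcopy j hx hy hz hxy hxz hyx hzx)
  rcases hglue i j hji.symm hx with h | h
  · exact absurd hyx (h hy hxy).not_ge
  · rw [← hx₂] at hzx
    exact absurd hzx (h hz hxz).not_ge

theorem isRankRoot_corner_succ {X : Set (Vertex p (n + 1))} {ρ : Vertex p (n + 1) → ℕ}
    {d : Fin p}
    (h : (sierpinskiTriangle p n).IsRankRoot (copy d ⁻¹' X) (ρ ∘ copy d) (corner n d)) :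
    (sierpinskiTriangle p (n + 1)).IsRankRoot X ρ (corner (n + 1) d) := by
  intro y' hy hadj
  obtain ⟨i, x, y, hx, rfl, hxy⟩ := exists_copy_of_adj hadj
  obtain ⟨rfl, rfl⟩ := copy_eq_corner_iff.1 hx
  rw [← hx]
  exact h hy hxy

theorem three_pow_succ_add_one_div_two (n : ℕ) :
    (3 ^ (n + 1) + 1) / 2 = 3 * ((3 ^ n + 1) / 2) - 1 := by
  obtain ⟨k, hk⟩ := (by decide : Odd 3).pow (n := n)
  rw [pow_succ, hk]
  omega

def HasRootedFVS (n : ℕ) (a b : Fin 3) : Prop :=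
  ∃ (X : Finset (Vertex 3 n)) (ρ : Vertex 3 n → ℕ), X.card ≤ (3 ^ n + 1) / 2 ∧
    (∀ c, corner n c ∈ X ↔ c = a) ∧ (sierpinskiTriangle 3 n).IsForestRank X ρ ∧
    (sierpinskiTriangle 3 n).IsRankRoot X ρ (corner n b)

theorem hasRootedFVS_zero {a b : Fin 3} : HasRootedFVS 0 a b := by
  classical
  refine ⟨{corner 0 a}, fun x => if x = corner 0 b then 0 else 1, by simp,
    fun c => by simp [corner_injective.eq_iff], ?_, ?_⟩
  · intro x y z hx hy hz hxy hxz _ _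
    obtain ⟨x, rfl⟩ := exists_eq_corner_zero x
    obtain ⟨y, rfl⟩ := exists_eq_corner_zero y
    obtain ⟨z, rfl⟩ := exists_eq_corner_zero z
    simp only [Finset.coe_singleton, Set.mem_singleton_iff, corner_injective.eq_iff] at hx hy hz
    have hxy' : x ≠ y := fun h => hxy.ne (h ▸ rfl)
    have hxz' : x ≠ z := fun h => hxz.ne (h ▸ rfl)
    exact congrArg _ (by omega)
  · intro y _ hby
    simp [hby.ne.symm]

theorem exists_isForestRank_of_copies {m : ℕ} {a b c : Fin 3} (hab : a ≠ b) (hca : c ≠ a)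
    (hcb : c ≠ b) {X : Set (Vertex 3 (m + 1))} {XA XB XC : Set (Vertex 3 m)}
    {ρA ρB ρC : Vertex 3 m → ℕ} (hXA : XA ⊆ copy a ⁻¹' X) (hXB : XB ⊆ copy b ⁻¹' X)
    (hXC : XC ⊆ copy c ⁻¹' X) (hcXB : corner m c ∈ XB) (hbXC : corner m b ∈ XC)
    (forestA : (sierpinskiTriangle 3 m).IsForestRank XA ρA)
    (rootA : (sierpinskiTriangle 3 m).IsRankRoot XA ρA (corner m b))
    (forestB : (sierpinskiTriangle 3 m).IsForestRank XB ρB)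
    (rootB : (sierpinskiTriangle 3 m).IsRankRoot XB ρB (corner m b))
    (forestC : (sierpinskiTriangle 3 m).IsForestRank XC ρC)
    (rootC : (sierpinskiTriangle 3 m).IsRankRoot XC ρC (corner m a)) :
    ∃ ρ, (sierpinskiTriangle 3 (m + 1)).IsForestRank X ρ ∧
      (sierpinskiTriangle 3 (m + 1)).IsRankRoot X ρ (corner (m + 1) b) := by
  obtain ⟨MB, hMB⟩ := Finite.bddAbove_range ρB
  obtain ⟨MA, hMA⟩ := Finite.bddAbove_range ρA
  -- copy `a` is ranked above copy `b` except for its root, the vertex it shares with copy `b`;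
  -- copy `c` is ranked above both except for its root, the vertex it shares with copy `a`
  let ρ := Function.extend (copy b) ρB <| Function.extend (copy a) (ρA · + (MB + 1)) <|
    Function.extend (copy c) (ρC · + (MB + 1 + MA + 1)) 0
  have evB (y) : ρ (copy b y) = ρB y := (copy_injective b).extend_apply _ _ y
  have evA (y) (hyb : y ≠ corner m b) : ρ (copy a y) = ρA y + (MB + 1) := by
    simp only [ρ]
    rw [extend_copy_apply_of_ne hab.symm hyb, (copy_injective a).extend_apply]
  have evC (y) (hya : y ≠ corner m a) (hyb : y ≠ corner m b) :
      ρ (copy c y) = ρC y + (MB + 1 + MA + 1) := by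
    simp only [ρ]
    rw [extend_copy_apply_of_ne hcb.symm hyb, extend_copy_apply_of_ne hca.symm hya,
      (copy_injective c).extend_apply]
  have hA := forestA.shift_of_isRankRoot rootA (ρ' := ρ ∘ copy a) (M := MB + 1)
    (by
      have := hMB ⟨corner m a, rfl⟩
      simp only [Function.comp_apply, copy_corner_comm a b, evB]
      omega)
    fun y _ hyb => evA y hyb
  have hC := forestC.shift_of_isRankRoot rootC (ρ' := ρ ∘ copy c) (M := MB + 1 + MA + 1)
    (by
      have := hMA ⟨corner m c, rfl⟩
      simp only [Function.comp_apply, copy_corner_comm c a, evA _ (corner_injective.ne hcb)]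
      omega)
    fun y hy hya => evC y hya fun hyb => hy (hyb ▸ hbXC)
  have hB : ρ ∘ copy b = ρB := funext evB
  refine ⟨ρ, isForestRank_succ (fun i => ?_) (fun i j hij hx => ?_),
    isRankRoot_corner_succ (hB ▸ rootB.mono hXB)⟩
  · rcases (by omega : i = a ∨ i = b ∨ i = c) with rfl | rfl | rfl
    exacts [hA.1.mono hXA, hB ▸ forestB.mono hXB, hC.1.mono hXC]
  · have hi : i = a ∨ i = b ∨ i = c := by omega
    have hj : j = a ∨ j = b ∨ j = c := by omega
    rcases hi with rfl | rfl | rfl <;> rcases hj with rfl | rfl | rfl <;>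
      first
      | exact absurd rfl hij
      | exact Or.inl (hA.2.mono hXA)
      | exact Or.inr (hA.2.mono hXA)
      | exact Or.inl (hC.2.mono hXC)
      | exact Or.inr (hC.2.mono hXC)
      | exact absurd (hXB hcXB) hx
      | exact absurd (hXC hbXC) hx

theorem hasRootedFVS_succ {m : ℕ} (ih : ∀ a b : Fin 3, a ≠ b → HasRootedFVS m a b)
    {a b : Fin 3} (hab : a ≠ b) : HasRootedFVS (m + 1) a b := by
  classical
  obtain ⟨c, hca, hcb⟩ := Fin.exists_ne_and_ne_of_two_lt a b (by norm_num)
  -- copies `b` and `c` both delete the vertex they share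
  obtain ⟨XA, ρA, cardA, cornA, forestA, rootA⟩ := ih a b hab
  obtain ⟨XB, ρB, cardB, cornB, forestB, rootB⟩ := ih c b hcb
  obtain ⟨XC, ρC, cardC, cornC, forestC, rootC⟩ := ih b a hab.symm
  have hcXB : corner m c ∈ XB := (cornB c).2 rfl
  have hbXC : corner m b ∈ XC := (cornC b).2 rfl
  set X := XA.image (copy a) ∪ XB.image (copy b) ∪ XC.image (copy c) with hX
  obtain ⟨ρ, hρ, hroot⟩ := exists_isForestRank_of_copies hab hca hcb (X := X)
    (fun y hy => Finset.mem_union_left _ (Finset.mem_union_left _ (Finset.mem_image_of_mem _ hy)))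
    (fun y hy => Finset.mem_union_left _ (Finset.mem_union_right _ (Finset.mem_image_of_mem _ hy)))
    (fun y hy => Finset.mem_union_right _ (Finset.mem_image_of_mem _ hy))
    hcXB hbXC forestA rootA forestB rootB forestC rootC
  refine ⟨X, ρ, ?_, fun d => ?_, hρ, hroot⟩
  · rw [three_pow_succ_add_one_div_two]
    exact card_image_copy_union_le cardA cardB cardC hcXB hbXC
  · simp only [hX, Finset.mem_union, corner_mem_image_copy_iff, cornA, cornB, cornC]
    constructor
    · rintro ((⟨-, h⟩ | ⟨rfl, rfl⟩) | ⟨rfl, rfl⟩)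
      exacts [h, absurd rfl hcb, absurd rfl hcb]
    · rintro rfl
      exact Or.inl (Or.inl ⟨rfl, rfl⟩)

theorem hasRootedFVS (m : ℕ) {a b : Fin 3} (hab : a ≠ b) : HasRootedFVS m a b := by
  induction m generalizing a b with
  | zero => exact hasRootedFVS_zero
  | succ m ih => exact hasRootedFVS_succ (fun _ _ => ih) hab

theorem feedbackNumber_sierpinskiTriangle_three (n : ℕ) :
    feedbackNumber (sierpinskiTriangle 3 n) = (3 ^ n + 1) / 2 := by
  obtain ⟨X, ρ, hX, -, hρ, -⟩ := hasRootedFVS n (a := 0) (b := 1) (by decide)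
  refine feedbackNumber_eq hρ.isFeedbackVertexSet hX fun Y hY => ?_
  have := three_pow_le_two_mul_card hY
  omega

end SierpinskiTriangle

open SierpinskiTriangle in
theorem stmt13 (n : Nat) (hn : 1 ≤ n) :
    feedbackNumber (sierpinskiTriangle 3 n) =
      3 * feedbackNumber (sierpinskiTriangle 3 (n - 1)) - 1 := by
  obtain ⟨m, rfl⟩ := Nat.exists_eq_add_of_le' hn
  rw [feedbackNumber_sierpinskiTriangle_three, feedbackNumber_sierpinskiTriangle_three,
    Nat.add_sub_cancel, three_pow_succ_add_one_div_two]
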